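/- Let φ : ℝ → ℝ be a measurable even function (φ(−u) = φ(u) for all u). Then ∫_{ℝ^m×ℝ^m} φ(Δ(x)) e^{−H(x)} dx = ∫_{ℝ^m×ℝ^m} φ(Δ(x)) e^{−H(ψ(x))} dx, provided at least one of the two integrands is integrable (in which case both are). -/
import Mathlib


open MeasureTheory

theorem stmt_1 (m : ℕ) (hm : 0 < m)
    (H : ((Fin m → ℝ) × (Fin m → ℝ)) → ℝ) (hHmeas : Measurable H)
    (hHS : ∀ x : (Fin m → ℝ) × (Fin m → ℝ), H (x.1, -x.2) = H x)
    (hHint : Integrable (fun x : (Fin m → ℝ) × (Fin m → ℝ) => Real.exp (-H x)))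
    (ψ : ((Fin m → ℝ) × (Fin m → ℝ)) ≃ ((Fin m → ℝ) × (Fin m → ℝ)))
    (hψmeas : Measurable ψ)
    (hψvol : MeasurePreserving ψ volume volume)
    (hψrev : ∀ x : (Fin m → ℝ) × (Fin m → ℝ),
      ((ψ.symm (x.1, -x.2)).1, -(ψ.symm (x.1, -x.2)).2) = ψ x)
    (φ : ℝ → ℝ) (hφmeas : Measurable φ) (hφeven : ∀ u : ℝ, φ (-u) = φ u)
    (hint : Integrable (fun x => φ (H (ψ x) - H x) * Real.exp (-H x)) ∨
      Integrable (fun x => φ (H (ψ x) - H x) * Real.exp (-H (ψ x)))) :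
    Integrable (fun x => φ (H (ψ x) - H x) * Real.exp (-H x)) ∧
    Integrable (fun x => φ (H (ψ x) - H x) * Real.exp (-H (ψ x))) ∧
    ∫ x, φ (H (ψ x) - H x) * Real.exp (-H x) =
      ∫ x, φ (H (ψ x) - H x) * Real.exp (-H (ψ x)) := by
  classical
  -- the momentum flip S
  set S : ((Fin m → ℝ) × (Fin m → ℝ)) → ((Fin m → ℝ) × (Fin m → ℝ)) :=
    fun x => (x.1, -x.2) with hSdef
  have hSmeas : Measurable S := measurable_fst.prodMk measurable_snd.neg
  have hSS : ∀ x, S (S x) = x := by intro x; simp [hSdef]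
  have hSvol : MeasurePreserving S
      (volume : Measure ((Fin m → ℝ) × (Fin m → ℝ))) volume :=
    (MeasurePreserving.id _).prod (Measure.measurePreserving_neg _)
  -- reversibility consequences
  have hrev1 : ∀ x, ψ.symm x = S (ψ (S x)) := by
    intro x
    have h2 : S (ψ.symm x) = ψ (S x) := by
      simpa [hSdef] using hψrev (S x)
    have h3 := congrArg S h2
    rw [hSS] at h3
    exact h3
  have hψsymm_meas : Measurable (ψ.symm : _ → _) := by
    have : (ψ.symm : _ → _) = S ∘ ψ ∘ S := funext fun x => hrev1 x
    rw [this]; exact hSmeas.comp (hψmeas.comp hSmeas)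
  have hψSψ : ∀ x, ψ (S (ψ x)) = S x := by
    intro x
    have h2 : ψ.symm (ψ x) = S (ψ (S (ψ x))) := hrev1 (ψ x)
    rw [Equiv.symm_apply_apply] at h2
    have h3 := congrArg S h2
    rw [hSS] at h3
    exact h3.symm
  -- the measurable equiv T = S ∘ ψ
  set ψm : MeasurableEquiv ((Fin m → ℝ) × (Fin m → ℝ)) ((Fin m → ℝ) × (Fin m → ℝ)) :=
    ⟨ψ, hψmeas, hψsymm_meas⟩ with hψm
  set Sm : MeasurableEquiv ((Fin m → ℝ) × (Fin m → ℝ)) ((Fin m → ℝ) × (Fin m → ℝ)) :=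
    ⟨⟨S, S, hSS, hSS⟩, hSmeas, hSmeas⟩ with hSm
  set T := ψm.trans Sm with hT
  have hTvol : MeasurePreserving T volume volume := hSvol.comp hψvol
  have hTemb : MeasurableEmbedding (T : _ → _) := T.measurableEmbedding
  -- key pointwise identity
  set f : ((Fin m → ℝ) × (Fin m → ℝ)) → ℝ :=
    fun x => φ (H (ψ x) - H x) * Real.exp (-H x) with hf
  set g : ((Fin m → ℝ) × (Fin m → ℝ)) → ℝ :=
    fun x => φ (H (ψ x) - H x) * Real.exp (-H (ψ x)) with hg
  have hHSx : ∀ x, H (S x) = H x := fun x => hHS x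
  have key : ∀ x, f (T x) = g x := by
    intro x
    have hTx : (T : _ → _) x = S (ψ x) := rfl
    have h1 : H (ψ (T x)) = H x := by rw [hTx, hψSψ, hHSx]
    have h2 : H ((T : _ → _) x) = H (ψ x) := by rw [hTx, hHSx]
    simp only [hf, hg, h1, h2]
    rw [show H x - H (ψ x) = -(H (ψ x) - H x) by ring, hφeven]
  have hfT : f ∘ (T : _ → _) = g := funext key
  have hiff : Integrable f ↔ Integrable g := by
    rw [← hTvol.integrable_comp_emb hTemb, hfT]
  have hint2 : Integrable f ∧ Integrable g := by
    rcases hint with h | h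
    · exact ⟨h, hiff.mp h⟩
    · exact ⟨hiff.mpr h, h⟩
  refine ⟨hint2.1, hint2.2, ?_⟩
  have hI := hTvol.integral_comp hTemb f
  calc ∫ x, f x = ∫ x, f (T x) := hI.symm
    _ = ∫ x, g x := by rw [show (fun x => f (T x)) = g from funext key]
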